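/- The Scherbak surface f_SB : ℝ² → ℝ³, f_SB(u,v) = (u³+u²v, 6u⁵+5u⁴v, v), together with ν_SB(u,v) = (10u², −1, −5u⁴)/√(1+100u⁴+25u⁸), is a frontal (|ν_SB| = 1 and ⟨ν_SB, (f_SB)_u⟩ = ⟨ν_SB, (f_SB)_v⟩ = 0 everywhere), its signed area density is λ = det((f_SB)_u, (f_SB)_v, ν_SB) = u(3u+2v)·√(1+100u⁴+25u⁸), and hence its singular set is the union of two transversal lines {u = 0} ∪ {3u+2v = 0}. -/

import Mathlib

noncomputable section

/-- Euclidean dot product on ℝ³. -/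
def dot3 (a b : Fin 3 → ℝ) : ℝ := a 0 * b 0 + a 1 * b 1 + a 2 * b 2

/-- Euclidean norm on ℝ³. -/
def norm3 (a : Fin 3 → ℝ) : ℝ := Real.sqrt (a 0 ^ 2 + a 1 ^ 2 + a 2 ^ 2)

/-- Determinant of three vectors in ℝ³ (as rows). -/
def det3 (a b c : Fin 3 → ℝ) : ℝ := Matrix.det (Matrix.of ![a, b, c])

/-- The Scherbak surface `f_SB(u,v) = (u³+u²v, 6u⁵+5u⁴v, v)`. -/
def fSB : ℝ × ℝ → Fin 3 → ℝ :=
  fun p => ![p.1 ^ 3 + p.1 ^ 2 * p.2, 6 * p.1 ^ 5 + 5 * p.1 ^ 4 * p.2, p.2]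

/-- The unit normal `ν_SB(u,v) = (10u², −1, −5u⁴)/√(1+100u⁴+25u⁸)`. -/
def nuSB : ℝ × ℝ → Fin 3 → ℝ :=
  fun p => (Real.sqrt (1 + 100 * p.1 ^ 4 + 25 * p.1 ^ 8))⁻¹ •
    ![10 * p.1 ^ 2, -1, -5 * p.1 ^ 4]

/-- The signed area density `λ = det(f_u, f_v, ν)` of the Scherbak surface. -/
def lamSB : ℝ × ℝ → ℝ :=
  fun p => det3 (fderiv ℝ fSB p (1, 0)) (fderiv ℝ fSB p (0, 1)) (nuSB p)

/-- A convenient family of linear maps `(x,y) ↦ a x + b y`. -/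
def Lc (a b : ℝ) : ℝ × ℝ →L[ℝ] ℝ :=
  a • ContinuousLinearMap.fst ℝ ℝ ℝ + b • ContinuousLinearMap.snd ℝ ℝ ℝ

lemma hasF (p : ℝ × ℝ) :
    HasFDerivAt fSB (ContinuousLinearMap.pi
      ![Lc (3 * p.1 ^ 2 + 2 * p.1 * p.2) (p.1 ^ 2),
        Lc (30 * p.1 ^ 4 + 20 * p.1 ^ 3 * p.2) (5 * p.1 ^ 4),
        Lc 0 1]) p := by
  rw [hasFDerivAt_pi']
  have h1 := hasFDerivAt_fst (p := p) (𝕜 := ℝ)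
  have h2 := hasFDerivAt_snd (p := p) (𝕜 := ℝ)
  intro i
  fin_cases i
  · show HasFDerivAt (fun q : ℝ × ℝ => q.1 ^ 3 + q.1 ^ 2 * q.2) _ p
    have he : (fun q : ℝ × ℝ => q.1 ^ 3 + q.1 ^ 2 * q.2)
        = fun q : ℝ × ℝ => q.1 * q.1 * q.1 + q.1 * q.1 * q.2 := by funext q; ring
    rw [he]
    refine (((h1.mul h1).mul h1).add ((h1.mul h1).mul h2)).congr_fderiv ?_
    refine ContinuousLinearMap.ext fun w => ?_
    simp [Lc]; ring
  · show HasFDerivAt (fun q : ℝ × ℝ => 6 * q.1 ^ 5 + 5 * q.1 ^ 4 * q.2) _ p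
    have he : (fun q : ℝ × ℝ => 6 * q.1 ^ 5 + 5 * q.1 ^ 4 * q.2)
        = fun q : ℝ × ℝ => 6 * (q.1 * q.1 * q.1 * q.1 * q.1)
          + 5 * (q.1 * q.1 * q.1 * q.1 * q.2) := by funext q; ring
    rw [he]
    refine ((((((h1.mul h1).mul h1).mul h1).mul h1).const_mul 6).add
      (((((h1.mul h1).mul h1).mul h1).mul h2).const_mul 5)).congr_fderiv ?_
    refine ContinuousLinearMap.ext fun w => ?_
    simp [Lc]; ring
  · show HasFDerivAt (fun q : ℝ × ℝ => q.2) _ p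
    refine h2.congr_fderiv ?_
    refine ContinuousLinearMap.ext fun w => ?_
    simp [Lc]

lemma fderiv_u (p : ℝ × ℝ) : fderiv ℝ fSB p (1, 0)
    = ![3 * p.1 ^ 2 + 2 * p.1 * p.2, 30 * p.1 ^ 4 + 20 * p.1 ^ 3 * p.2, 0] := by
  rw [(hasF p).fderiv]
  funext i
  fin_cases i <;> simp [Lc]

lemma fderiv_v (p : ℝ × ℝ) : fderiv ℝ fSB p (0, 1)
    = ![p.1 ^ 2, 5 * p.1 ^ 4, 1] := by
  rw [(hasF p).fderiv]
  funext i
  fin_cases i <;> simp [Lc]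

lemma Spos (p : ℝ × ℝ) : (0:ℝ) < 1 + 100 * p.1 ^ 4 + 25 * p.1 ^ 8 := by positivity

lemma lam_eq (p : ℝ × ℝ) : lamSB p =
    p.1 * (3 * p.1 + 2 * p.2) * Real.sqrt (1 + 100 * p.1 ^ 4 + 25 * p.1 ^ 8) := by
  have hS := Spos p
  have hs : (0:ℝ) < Real.sqrt (1 + 100 * p.1 ^ 4 + 25 * p.1 ^ 8) := Real.sqrt_pos.2 hS
  have hss : Real.sqrt (1 + 100 * p.1 ^ 4 + 25 * p.1 ^ 8)
      * Real.sqrt (1 + 100 * p.1 ^ 4 + 25 * p.1 ^ 8)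
      = 1 + 100 * p.1 ^ 4 + 25 * p.1 ^ 8 := Real.mul_self_sqrt hS.le
  rw [lamSB, fderiv_u, fderiv_v, nuSB]
  have hsmul : ∀ (a b c : Fin 3 → ℝ) (t : ℝ), det3 a b (t • c) = t * det3 a b c := by
    intro a b c t
    simp [det3, Matrix.det_fin_three]
    ring
  rw [hsmul]
  have hdet : det3 (![3 * p.1 ^ 2 + 2 * p.1 * p.2, 30 * p.1 ^ 4 + 20 * p.1 ^ 3 * p.2, 0])
      (![p.1 ^ 2, 5 * p.1 ^ 4, 1]) (![10 * p.1 ^ 2, -1, -5 * p.1 ^ 4])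
      = p.1 * (3 * p.1 + 2 * p.2) * (1 + 100 * p.1 ^ 4 + 25 * p.1 ^ 8) := by
    simp [det3, Matrix.det_fin_three]
    ring
  rw [hdet, inv_mul_eq_div, div_eq_iff hs.ne']
  linear_combination (-(p.1 * (3 * p.1 + 2 * p.2))) * hss

/-- The Scherbak surface is a frontal (`|ν_SB| = 1` and `ν_SB ⊥ (f_SB)_u, (f_SB)_v`),
its signed area density is `λ = u(3u+2v)·√(1+100u⁴+25u⁸)`, and hence its singular
set is the union of the two transversal lines `{u = 0} ∪ {3u+2v = 0}`. -/
theorem scherbak_surface :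
    (∀ p : ℝ × ℝ, norm3 (nuSB p) = 1) ∧
    (∀ p : ℝ × ℝ, dot3 (nuSB p) (fderiv ℝ fSB p (1, 0)) = 0 ∧
      dot3 (nuSB p) (fderiv ℝ fSB p (0, 1)) = 0) ∧
    (∀ p : ℝ × ℝ, lamSB p =
      p.1 * (3 * p.1 + 2 * p.2) * Real.sqrt (1 + 100 * p.1 ^ 4 + 25 * p.1 ^ 8)) ∧
    ({p : ℝ × ℝ | lamSB p = 0} =
      {p : ℝ × ℝ | p.1 = 0} ∪ {p : ℝ × ℝ | 3 * p.1 + 2 * p.2 = 0}) := by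
  refine ⟨?_, ?_, lam_eq, ?_⟩
  · intro p
    have hS := Spos p
    have hs : (0:ℝ) < Real.sqrt (1 + 100 * p.1 ^ 4 + 25 * p.1 ^ 8) := Real.sqrt_pos.2 hS
    have hss : Real.sqrt (1 + 100 * p.1 ^ 4 + 25 * p.1 ^ 8)
        * Real.sqrt (1 + 100 * p.1 ^ 4 + 25 * p.1 ^ 8)
        = 1 + 100 * p.1 ^ 4 + 25 * p.1 ^ 8 := Real.mul_self_sqrt hS.le
    rw [norm3, nuSB]
    have : ((Real.sqrt (1 + 100 * p.1 ^ 4 + 25 * p.1 ^ 8))⁻¹ •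
        (![10 * p.1 ^ 2, -1, -5 * p.1 ^ 4] : Fin 3 → ℝ)) 0 ^ 2
        + ((Real.sqrt (1 + 100 * p.1 ^ 4 + 25 * p.1 ^ 8))⁻¹ •
        (![10 * p.1 ^ 2, -1, -5 * p.1 ^ 4] : Fin 3 → ℝ)) 1 ^ 2
        + ((Real.sqrt (1 + 100 * p.1 ^ 4 + 25 * p.1 ^ 8))⁻¹ •
        (![10 * p.1 ^ 2, -1, -5 * p.1 ^ 4] : Fin 3 → ℝ)) 2 ^ 2 = 1 := by
      simp only [Pi.smul_apply, smul_eq_mul, Matrix.cons_val_zero, Matrix.cons_val_one,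
        Matrix.head_cons, Matrix.cons_val_two, Matrix.tail_cons]
      have hmul : ∀ x y z s : ℝ,
          (s * x) ^ 2 + (s * y) ^ 2 + (s * z) ^ 2 = s ^ 2 * (x ^ 2 + y ^ 2 + z ^ 2) := by
        intros; ring
      rw [hmul, inv_pow, Real.sq_sqrt hS.le, inv_mul_eq_one₀ hS.ne']
      ring
    rw [this, Real.sqrt_one]
  · intro p
    rw [fderiv_u, fderiv_v]
    constructor <;>
    · rw [dot3, nuSB]; simp; ring
  · ext p
    have hs : (0:ℝ) < Real.sqrt (1 + 100 * p.1 ^ 4 + 25 * p.1 ^ 8) :=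
      Real.sqrt_pos.2 (Spos p)
    simp only [Set.mem_setOf_eq, Set.mem_union, lam_eq p, mul_eq_zero]
    constructor
    · rintro ((h | h) | h)
      · exact Or.inl h
      · exact Or.inr h
      · exact absurd h hs.ne'
    · rintro (h | h)
      · exact Or.inl (Or.inl h)
      · exact Or.inl (Or.inr h)
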